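/- arXiv:math/0411111 — 3 statements merged into one kernel-verified Lean document; each statement's English description precedes it below -/
import Mathlib

section
/- Fix integers n ≥ 1 and m ≥ 1. Let L be an n×n matrix with entries in ℂ((ħ^{-1}))[[x_1,…,x_m]] such that L|_{x=0} = Id_n. Then there exist unique n×n matrices L_+ with entries in ℂ[ħ][[x_1,…,x_m]] and L_− with entries in ℂ[[ħ^{-1}]][[x_1,…,x_m]] such that L = L_+ · L_−, L_+|_{x=0} = Id_n, and L_− ∈ Id_n + ħ^{-1} M_n(ℂ[[ħ^{-1}]][[x_1,…,x_m]]) (i.e. the constant term of L_− in ħ^{-1} is the identity). -/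
noncomputable section

/-- `ℂ((ħ⁻¹))`, realized as formal Laurent series (Hahn series over `ℤ`) in the
variable `X = ħ⁻¹`; the coefficient of `ħ^k` is the coefficient at `z = -k`. -/
abbrev LH : Type := LaurentSeries ℂ

/-- The element `ħ = X⁻¹`: the Hahn series with single coefficient `1` in degree `-1`. -/
def hbar : LH := HahnSeries.single (-1 : ℤ) 1

/-- `f` lies in the subring `ℂ[ħ]` (no positive powers of the variable `X = ħ⁻¹`). -/
def InPolyH (f : LH) : Prop := ∀ z : ℤ, 0 < z → f.coeff z = 0

/-- `f` lies in the subring `ℂ[[ħ⁻¹]]`. -/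
def InPSinv (f : LH) : Prop := ∀ z : ℤ, z < 0 → f.coeff z = 0

/-- `f` lies in `ħ⁻¹ · ℂ[[ħ⁻¹]]` (only strictly negative powers of `ħ`). -/
def InPSinvPos (f : LH) : Prop := ∀ z : ℤ, z ≤ 0 → f.coeff z = 0

/-- `f` is a constant (a complex scalar), i.e. independent of `ħ`. -/
def IsConstL (f : LH) : Prop := ∀ z : ℤ, z ≠ 0 → f.coeff z = 0

section ops

variable {σ R : Type} [CommRing R] {n : ℕ}

/-- Formal partial derivative `∂/∂x` on multivariate formal power series. -/
def pd (x : σ) (f : MvPowerSeries σ R) : MvPowerSeries σ R :=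
  fun d => ((d x + 1 : ℕ) : R) * MvPowerSeries.coeff (R := R) (d + Finsupp.single x 1) f

/-- Euler derivative `x·∂/∂x` on multivariate formal power series. -/
def eulerD (x : σ) (f : MvPowerSeries σ R) : MvPowerSeries σ R :=
  fun d => ((d x : ℕ) : R) * MvPowerSeries.coeff (R := R) d f

/-- Entrywise partial derivative of a matrix of power series. -/
def mpd (x : σ) (M : Matrix (Fin n) (Fin n) (MvPowerSeries σ R)) :
    Matrix (Fin n) (Fin n) (MvPowerSeries σ R) := M.map (pd x)

/-- Entrywise Euler derivative of a matrix of power series. -/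
def meu (x : σ) (M : Matrix (Fin n) (Fin n) (MvPowerSeries σ R)) :
    Matrix (Fin n) (Fin n) (MvPowerSeries σ R) := M.map (eulerD x)

/-- A constant matrix, viewed as a matrix of power series. -/
def mC (M : Matrix (Fin n) (Fin n) R) : Matrix (Fin n) (Fin n) (MvPowerSeries σ R) :=
  M.map (MvPowerSeries.C (σ := σ) (R := R))

/-- Constant term (restriction to `Q = t = 0`) of a matrix of power series. -/
def m0 (M : Matrix (Fin n) (Fin n) (MvPowerSeries σ R)) : Matrix (Fin n) (Fin n) R :=
  M.map (MvPowerSeries.constantCoeff (σ := σ) (R := R))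

end ops

section lops

variable {σ : Type} {n : ℕ}

/-- The scalar `ħ` inside `ℂ((ħ⁻¹))[[Q,t]]`. -/
def hbarC (σ : Type) : MvPowerSeries σ LH := MvPowerSeries.C (σ := σ) (R := LH) hbar

/-- The entries of the matrix `M` lie in `ℂ[ħ][[Q,t]]`. -/
def MatPolyH (M : Matrix (Fin n) (Fin n) (MvPowerSeries σ LH)) : Prop :=
  ∀ (i j : Fin n) (d : σ →₀ ℕ), InPolyH (MvPowerSeries.coeff (R := LH) d (M i j))

/-- The entries of the matrix `M` lie in `ℂ[[Q,t]]`, i.e. are independent of `ħ`. -/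
def MatNoH (M : Matrix (Fin n) (Fin n) (MvPowerSeries σ LH)) : Prop :=
  ∀ (i j : Fin n) (d : σ →₀ ℕ), IsConstL (MvPowerSeries.coeff (R := LH) d (M i j))

/-- The first-order operator `v ↦ ħ·(x ∂/∂x)v + A·v` on column vectors. -/
def nablaE (x : σ) (A : Matrix (Fin n) (Fin n) (MvPowerSeries σ LH))
    (v : Fin n → MvPowerSeries σ LH) : Fin n → MvPowerSeries σ LH :=
  fun i => hbarC σ * eulerD x (v i) + A.mulVec v i

/-- The first-order operator `v ↦ ħ·(∂/∂x)v + A·v` on column vectors. -/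
def nablaP (x : σ) (A : Matrix (Fin n) (Fin n) (MvPowerSeries σ LH))
    (v : Fin n → MvPowerSeries σ LH) : Fin n → MvPowerSeries σ LH :=
  fun i => hbarC σ * pd x (v i) + A.mulVec v i

end lops

/-! Write `L₊ = 1 + ∑_{d ≠ 0} A_d x^d` and `L₋ = 1 + ∑_{d ≠ 0} B_d x^d`. Comparing coefficients of
`x^d` in `L = L₊ L₋` gives `L_d = A_d + B_d + ∑_{e + f = d, e, f ≠ 0} A_e B_f`, where the last sum
only involves coefficients of lower total degree. Since `A_d` must lie in `ℂ[ħ]` and `B_d` in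
`ħ⁻¹ℂ[[ħ⁻¹]]`, and `ℂ((ħ⁻¹)) = ℂ[ħ] ⊕ ħ⁻¹ℂ[[ħ⁻¹]]`, this determines `(A_d, B_d)` uniquely by
induction on the degree, and conversely defines them recursively. -/

open Finset HahnSeries

section CoeffMatrix

variable {σ ι R : Type*}

def coeffMat [Semiring R] (d : σ →₀ ℕ) (P : Matrix ι ι (MvPowerSeries σ R)) : Matrix ι ι R :=
  P.map (MvPowerSeries.coeff d)

theorem coeffMat_ext [Semiring R] {P Q : Matrix ι ι (MvPowerSeries σ R)}
    (h : ∀ d, coeffMat d P = coeffMat d Q) : P = Q :=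
  Matrix.ext fun i j => MvPowerSeries.ext fun d => congrFun (congrFun (h d) i) j

theorem coeffMat_sub [Ring R] (d : σ →₀ ℕ) (P Q : Matrix ι ι (MvPowerSeries σ R)) :
    coeffMat d (P - Q) = coeffMat d P - coeffMat d Q := by
  ext i j
  simp [coeffMat]

theorem coeffMat_zero_one [DecidableEq ι] [Semiring R] :
    coeffMat 0 (1 : Matrix ι ι (MvPowerSeries σ R)) = 1 :=
  Matrix.map_one _ (map_zero _) MvPowerSeries.coeff_zero_one

theorem coeffMat_one_of_ne_zero [DecidableEq ι] [Semiring R] [DecidableEq σ] {d : σ →₀ ℕ}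
    (hd : d ≠ 0) :
    coeffMat d (1 : Matrix ι ι (MvPowerSeries σ R)) = 0 := by
  ext i j
  by_cases hij : i = j <;> simp [coeffMat, hij, MvPowerSeries.coeff_one, hd]

theorem coeffMat_mul [Fintype ι] [Semiring R] [DecidableEq σ] (d : σ →₀ ℕ)
    (P Q : Matrix ι ι (MvPowerSeries σ R)) :
    coeffMat d (P * Q) = ∑ p ∈ antidiagonal d, coeffMat p.1 P * coeffMat p.2 Q := by
  ext i j
  simp only [coeffMat, Matrix.map_apply, Matrix.mul_apply, map_sum, MvPowerSeries.coeff_mul,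
    Matrix.sum_apply]
  exact Finset.sum_comm

theorem coeffMat_zero_mul [Fintype ι] [Semiring R] [DecidableEq σ]
    (P Q : Matrix ι ι (MvPowerSeries σ R)) :
    coeffMat 0 (P * Q) = coeffMat 0 P * coeffMat 0 Q := by
  rw [coeffMat_mul, Finsupp.antidiagonal_zero, sum_singleton]

theorem coeffMat_zero_eq_m0 {τ S : Type} [CommRing S] {n : ℕ}
    (P : Matrix (Fin n) (Fin n) (MvPowerSeries τ S)) :
    coeffMat 0 P = m0 P := by
  ext i j
  simp [coeffMat, m0, MvPowerSeries.coeff_zero_eq_constantCoeff]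

end CoeffMatrix

section CrossTerms

variable {σ ι R : Type*} [DecidableEq σ] [Fintype ι] [Semiring R]

theorem degree_fst_lt_of_mem_antidiagonal {d : σ →₀ ℕ} {p : (σ →₀ ℕ) × (σ →₀ ℕ)}
    (hp : p ∈ antidiagonal d) (h₂ : p.2 ≠ 0) : p.1.degree < d.degree := by
  rw [HasAntidiagonal.mem_antidiagonal] at hp
  have := (Finsupp.degree_eq_zero_iff p.2).not.mpr h₂
  rw [← hp, map_add]
  omega

theorem degree_snd_lt_of_mem_antidiagonal {d : σ →₀ ℕ} {p : (σ →₀ ℕ) × (σ →₀ ℕ)}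
    (hp : p ∈ antidiagonal d) (h₁ : p.1 ≠ 0) : p.2.degree < d.degree := by
  rw [HasAntidiagonal.mem_antidiagonal] at hp
  have := (Finsupp.degree_eq_zero_iff p.1).not.mpr h₁
  rw [← hp, map_add]
  omega

def crossTerms (X : (σ →₀ ℕ) → Matrix ι ι R × Matrix ι ι R) (d : σ →₀ ℕ) : Matrix ι ι R :=
  ∑ p ∈ antidiagonal d with p.1 ≠ 0 ∧ p.2 ≠ 0, (X p.1).1 * (X p.2).2

theorem crossTerms_congr {X Y : (σ →₀ ℕ) → Matrix ι ι R × Matrix ι ι R} {d : σ →₀ ℕ}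
    (h : ∀ e : σ →₀ ℕ, e.degree < d.degree → X e = Y e) : crossTerms X d = crossTerms Y d := by
  refine sum_congr rfl fun p hp => ?_
  obtain ⟨hp, h₁, h₂⟩ := mem_filter.mp hp
  rw [h p.1 (degree_fst_lt_of_mem_antidiagonal hp h₂),
    h p.2 (degree_snd_lt_of_mem_antidiagonal hp h₁)]

theorem filter_antidiagonal_not_ne_zero {d : σ →₀ ℕ} (hd : d ≠ 0) :
    {p ∈ antidiagonal d | ¬(p.1 ≠ 0 ∧ p.2 ≠ 0)} = {(0, d), (d, 0)} := by
  ext ⟨a, b⟩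
  simp only [mem_filter, HasAntidiagonal.mem_antidiagonal, mem_insert, mem_singleton,
    Prod.mk.injEq]
  constructor
  · rintro ⟨rfl, h⟩
    by_cases ha : a = 0
    · simp [ha]
    · simp_all
  · rintro (⟨rfl, rfl⟩ | ⟨rfl, rfl⟩) <;> simp

theorem coeffMat_mul_eq_add_crossTerms [DecidableEq ι] {P Q : Matrix ι ι (MvPowerSeries σ R)}
    (hP : coeffMat 0 P = 1) (hQ : coeffMat 0 Q = 1) {d : σ →₀ ℕ} (hd : d ≠ 0) :
    coeffMat d (P * Q) =
      coeffMat d P + coeffMat d Q + crossTerms (fun e => (coeffMat e P, coeffMat e Q)) d := by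
  have hne : ((0 : σ →₀ ℕ), d) ≠ (d, 0) := fun h => hd (Prod.mk.inj h).1.symm
  rw [coeffMat_mul, ← sum_filter_not_add_sum_filter _ (fun p => p.1 ≠ 0 ∧ p.2 ≠ 0),
    filter_antidiagonal_not_ne_zero hd, sum_pair hne, hP, hQ, one_mul, mul_one,
    add_comm _ (coeffMat d P)]
  rfl

end CrossTerms

section Splitting

variable {ι : Type*}

theorem inPolyH_truncLT_one (f : LH) : InPolyH (truncLT 1 f) := by
  intro z hz
  exact coeff_truncLT_of_le (by omega) f

theorem inPSinvPos_sub_truncLT_one (f : LH) : InPSinvPos (f - truncLT 1 f) := by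
  intro z hz
  rw [coeff_sub, coeff_truncLT_of_lt (by omega), sub_self]

theorem truncLT_one_eq_of_add_eq {f g h : LH} (hg : InPolyH g) (hh : InPSinvPos h)
    (hf : g + h = f) : truncLT 1 f = g := by
  ext z
  rw [← hf, HahnSeries.coeff_truncLT, coeff_add]
  split_ifs with hz
  · rw [hh z (by omega), add_zero]
  · rw [hg z (by omega)]

theorem IsConstL.inPolyH {f : LH} (hf : IsConstL f) : InPolyH f :=
  fun z hz => hf z hz.ne'

theorem IsConstL.inPSinv {f : LH} (hf : IsConstL f) : InPSinv f :=
  fun z hz => hf z hz.ne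

theorem isConstL_one_apply [DecidableEq ι] (i j : ι) : IsConstL ((1 : Matrix ι ι LH) i j) := by
  intro z hz
  rw [Matrix.one_apply]
  split_ifs
  · rw [coeff_one, if_neg hz]
  · rfl

/-- The splitting `ℂ((ħ⁻¹)) = ℂ[ħ] ⊕ ħ⁻¹ℂ[[ħ⁻¹]]`, entrywise: `truncLT 1` keeps the exponents
`z ≤ 0` of `X = ħ⁻¹`. -/
def birkhoffSplit (C : Matrix ι ι LH) : Matrix ι ι LH × Matrix ι ι LH :=
  (C.map (truncLT 1), C - C.map (truncLT 1))

theorem birkhoffSplit_fst_add_snd (C : Matrix ι ι LH) :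
    (birkhoffSplit C).1 + (birkhoffSplit C).2 = C :=
  add_sub_cancel _ C

theorem birkhoffSplit_eq_of_add_eq {A B C : Matrix ι ι LH} (hA : ∀ i j, InPolyH (A i j))
    (hB : ∀ i j, InPSinvPos (B i j)) (h : A + B = C) : birkhoffSplit C = (A, B) := by
  have hmap : C.map (truncLT 1) = A :=
    Matrix.ext fun i j => truncLT_one_eq_of_add_eq (hA i j) (hB i j) (by rw [← h]; rfl)
  rw [birkhoffSplit, hmap, ← h, add_sub_cancel_left]

end Splitting

section Factors

variable {σ ι : Type*} [DecidableEq σ] [Fintype ι] [DecidableEq ι]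

/-- The coefficients `(A_d, B_d)` of `(L₊, L₋)` at `x^d`. The sum over `attach` only serves the termination
proof; `birkhoffCoeff_of_ne_zero` is the form used. -/
def birkhoffCoeff (L : Matrix ι ι (MvPowerSeries σ LH)) (d : σ →₀ ℕ) :
    Matrix ι ι LH × Matrix ι ι LH :=
  if d = 0 then (1, 1)
  else
    birkhoffSplit (coeffMat d L - ∑ p ∈ (antidiagonal d).attach,
      if p.1.1 ≠ 0 ∧ p.1.2 ≠ 0 then (birkhoffCoeff L p.1.1).1 * (birkhoffCoeff L p.1.2).2
      else 0)
termination_by d.degree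
decreasing_by
  · exact degree_fst_lt_of_mem_antidiagonal p.2 ‹_ ∧ _›.2
  · exact degree_snd_lt_of_mem_antidiagonal p.2 ‹_ ∧ _›.1

variable (L : Matrix ι ι (MvPowerSeries σ LH))

theorem birkhoffCoeff_zero : birkhoffCoeff L 0 = (1, 1) := by
  rw [birkhoffCoeff, if_pos rfl]

theorem birkhoffCoeff_of_ne_zero {d : σ →₀ ℕ} (hd : d ≠ 0) :
    birkhoffCoeff L d = birkhoffSplit (coeffMat d L - crossTerms (birkhoffCoeff L) d) := by
  rw [birkhoffCoeff, if_neg hd, crossTerms, sum_filter, sum_attach (antidiagonal d)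
    (fun p => if p.1 ≠ 0 ∧ p.2 ≠ 0 then (birkhoffCoeff L p.1).1 * (birkhoffCoeff L p.2).2 else 0)]

def birkhoffPlus : Matrix ι ι (MvPowerSeries σ LH) :=
  Matrix.of fun i j d => (birkhoffCoeff L d).1 i j

def birkhoffMinus : Matrix ι ι (MvPowerSeries σ LH) :=
  Matrix.of fun i j d => (birkhoffCoeff L d).2 i j

theorem coeffMat_birkhoffPlus (d : σ →₀ ℕ) :
    coeffMat d (birkhoffPlus L) = (birkhoffCoeff L d).1 :=
  rfl

theorem coeffMat_birkhoffMinus (d : σ →₀ ℕ) :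
    coeffMat d (birkhoffMinus L) = (birkhoffCoeff L d).2 :=
  rfl

theorem coeffMat_zero_birkhoffPlus : coeffMat 0 (birkhoffPlus L) = 1 := by
  rw [coeffMat_birkhoffPlus, birkhoffCoeff_zero]

theorem coeffMat_zero_birkhoffMinus : coeffMat 0 (birkhoffMinus L) = 1 := by
  rw [coeffMat_birkhoffMinus, birkhoffCoeff_zero]

theorem inPolyH_coeffMat_birkhoffPlus (d : σ →₀ ℕ) (i j : ι) :
    InPolyH (coeffMat d (birkhoffPlus L) i j) := by
  rw [coeffMat_birkhoffPlus]
  by_cases hd : d = 0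
  · rw [hd, birkhoffCoeff_zero]
    exact (isConstL_one_apply i j).inPolyH
  · rw [birkhoffCoeff_of_ne_zero L hd]
    exact inPolyH_truncLT_one _

theorem inPSinvPos_coeffMat_birkhoffMinus_sub_one (d : σ →₀ ℕ) (i j : ι) :
    InPSinvPos (coeffMat d (birkhoffMinus L - 1) i j) := by
  rw [coeffMat_sub, coeffMat_birkhoffMinus]
  by_cases hd : d = 0
  · rw [hd, birkhoffCoeff_zero, coeffMat_zero_one, sub_self]
    exact fun _ _ => rfl
  · rw [birkhoffCoeff_of_ne_zero L hd, coeffMat_one_of_ne_zero hd, sub_zero]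
    exact inPSinvPos_sub_truncLT_one _

theorem inPSinv_coeffMat_birkhoffMinus (d : σ →₀ ℕ) (i j : ι) :
    InPSinv (coeffMat d (birkhoffMinus L) i j) := by
  rw [coeffMat_birkhoffMinus]
  by_cases hd : d = 0
  · rw [hd, birkhoffCoeff_zero]
    exact (isConstL_one_apply i j).inPSinv
  · rw [birkhoffCoeff_of_ne_zero L hd]
    exact fun z hz => inPSinvPos_sub_truncLT_one _ z hz.le

theorem birkhoffPlus_mul_birkhoffMinus (hL : coeffMat 0 L = 1) :
    birkhoffPlus L * birkhoffMinus L = L := by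
  refine coeffMat_ext fun d => ?_
  by_cases hd : d = 0
  · rw [hd, coeffMat_zero_mul, coeffMat_zero_birkhoffPlus, coeffMat_zero_birkhoffMinus, hL,
      mul_one]
  · have hX : (fun e => (coeffMat e (birkhoffPlus L), coeffMat e (birkhoffMinus L))) =
        birkhoffCoeff L := rfl
    rw [coeffMat_mul_eq_add_crossTerms (coeffMat_zero_birkhoffPlus L)
      (coeffMat_zero_birkhoffMinus L) hd, hX, coeffMat_birkhoffPlus, coeffMat_birkhoffMinus,
      birkhoffCoeff_of_ne_zero L hd, birkhoffSplit_fst_add_snd, sub_add_cancel]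

variable {L} in
theorem eq_birkhoffPlus_and_eq_birkhoffMinus {P Q : Matrix ι ι (MvPowerSeries σ LH)}
    (hL : coeffMat 0 L = 1) (hLPQ : L = P * Q) (hP0 : coeffMat 0 P = 1)
    (hP : ∀ i j d, InPolyH (coeffMat d P i j))
    (hQ : ∀ i j d, InPSinvPos (coeffMat d (Q - 1) i j)) :
    P = birkhoffPlus L ∧ Q = birkhoffMinus L := by
  have hQ0 : coeffMat 0 Q = 1 :=
    calc coeffMat 0 Q = coeffMat 0 P * coeffMat 0 Q := by rw [hP0, one_mul]
      _ = 1 := by rw [← coeffMat_zero_mul, ← hLPQ, hL]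
  have hcoeff : ∀ d, (coeffMat d P, coeffMat d Q) = birkhoffCoeff L d := by
    intro d
    induction d using (measure Finsupp.degree).wf.induction with
    | _ d ih =>
    by_cases hd : d = 0
    · rw [hd, hP0, hQ0, birkhoffCoeff_zero]
    · rw [birkhoffCoeff_of_ne_zero L hd,
        ← crossTerms_congr (X := fun e => (coeffMat e P, coeffMat e Q)) ih]
      refine (birkhoffSplit_eq_of_add_eq (hP · · d) (fun i j => ?_) ?_).symm
      · simpa only [coeffMat_sub, coeffMat_one_of_ne_zero hd, sub_zero] using hQ i j d
      · rw [hLPQ, coeffMat_mul_eq_add_crossTerms hP0 hQ0 hd, add_sub_cancel_right]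
  exact ⟨coeffMat_ext fun d => congrArg Prod.fst (hcoeff d),
    coeffMat_ext fun d => congrArg Prod.snd (hcoeff d)⟩

end Factors

theorem statement2_general (n m : ℕ)
    (L : Matrix (Fin n) (Fin n) (MvPowerSeries (Fin m) LH))
    (hL0 : m0 L = 1) :
    ∃! P : Matrix (Fin n) (Fin n) (MvPowerSeries (Fin m) LH) ×
           Matrix (Fin n) (Fin n) (MvPowerSeries (Fin m) LH),
      -- `L₊` has entries in `ℂ[ħ][[x]]`
      (∀ (i j : Fin n) (d : Fin m →₀ ℕ), InPolyH (MvPowerSeries.coeff (R := LH) d (P.1 i j))) ∧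
      -- `L₋` has entries in `ℂ[[ħ⁻¹]][[x]]`
      (∀ (i j : Fin n) (d : Fin m →₀ ℕ), InPSinv (MvPowerSeries.coeff (R := LH) d (P.2 i j))) ∧
      -- `L = L₊ · L₋`
      L = P.1 * P.2 ∧
      -- `L₊|_{x=0} = Id`
      m0 P.1 = 1 ∧
      -- `L₋ ∈ Id + ħ⁻¹·M_n(ℂ[[ħ⁻¹]][[x]])`
      (∀ (i j : Fin n) (d : Fin m →₀ ℕ), InPSinvPos (MvPowerSeries.coeff (R := LH) d ((P.2 - 1) i j))) := by
  have hL : coeffMat 0 L = 1 := by rwa [coeffMat_zero_eq_m0]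
  refine ⟨(birkhoffPlus L, birkhoffMinus L),
    ⟨fun i j d => inPolyH_coeffMat_birkhoffPlus L d i j,
      fun i j d => inPSinv_coeffMat_birkhoffMinus L d i j,
      (birkhoffPlus_mul_birkhoffMinus L hL).symm, ?_,
      fun i j d => inPSinvPos_coeffMat_birkhoffMinus_sub_one L d i j⟩, ?_⟩
  · rw [← coeffMat_zero_eq_m0, coeffMat_zero_birkhoffPlus]
  · rintro ⟨P, Q⟩ ⟨hP, -, hLPQ, hP0, hQ⟩
    obtain ⟨rfl, rfl⟩ := eq_birkhoffPlus_and_eq_birkhoffMinus hL hLPQ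
      (by rwa [coeffMat_zero_eq_m0]) hP hQ
    rfl

/-- formal Birkhoff factorization: existence and uniqueness of
`L = L₊ · L₋` with `L₊` over `ℂ[ħ][[x]]`, `L₊|_{x=0} = Id`, and
`L₋ ∈ Id + ħ⁻¹·M_n(ℂ[[ħ⁻¹]][[x]])`. -/
theorem statement2 (n m : ℕ) (hn : 1 ≤ n) (hm : 1 ≤ m)
    (L : Matrix (Fin n) (Fin n) (MvPowerSeries (Fin m) LH))
    (hL0 : m0 L = 1) :
    ∃! P : Matrix (Fin n) (Fin n) (MvPowerSeries (Fin m) LH) ×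
           Matrix (Fin n) (Fin n) (MvPowerSeries (Fin m) LH),
      -- `L₊` has entries in `ℂ[ħ][[x]]`
      (∀ (i j : Fin n) (d : Fin m →₀ ℕ), InPolyH (MvPowerSeries.coeff (R := LH) d (P.1 i j))) ∧
      -- `L₋` has entries in `ℂ[[ħ⁻¹]][[x]]`
      (∀ (i j : Fin n) (d : Fin m →₀ ℕ), InPSinv (MvPowerSeries.coeff (R := LH) d (P.2 i j))) ∧
      -- `L = L₊ · L₋`
      L = P.1 * P.2 ∧
      -- `L₊|_{x=0} = Id`
      m0 P.1 = 1 ∧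
      -- `L₋ ∈ Id + ħ⁻¹·M_n(ℂ[[ħ⁻¹]][[x]])`
      (∀ (i j : Fin n) (d : Fin m →₀ ℕ), InPSinvPos (MvPowerSeries.coeff (R := LH) d ((P.2 - 1) i j))) :=
  statement2_general n m L hL0
end
end

section
/- Fix n ≥ 1, r ≥ 1, s ≥ 0. Let A_a ∈ M_n(ℂ[ħ][[Q^1,…,Q^r,t^0,…,t^s]]) for 1 ≤ a ≤ r, and suppose p_a := A_a|_{Q=t=0} has entries in ℂ. Let e_0 ∈ ℂ^n be a vector such that the vectors P(p_1,…,p_r)e_0, with P ranging over all polynomials, span ℂ^n. Let M = (ℂ[ħ][[Q,t]])^n, and let N ⊆ M be any ℂ[ħ][[Q,t]]-submodule that contains the constant vector e_0 and is stable under each of the operators v ↦ ħQ^a ∂v/∂Q^a + A_a·v (1 ≤ a ≤ r). Then N = M. -/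
noncomputable section

/-!
Taking constant terms at `Q = t = 0` sends `N` to a subspace of `ℂ^n`, its constant fibre.
The Euler derivatives kill constant terms, so stability of `N` under `ħQ^a∂/∂Q^a + A_a` makes
the fibre stable under the `p_a`; it contains `e₀`, hence it is all of `ℂ^n`. Lifting the
standard basis into `N` gives a matrix whose constant term is the identity, so it is invertible
over the power series ring (constant-term reflects units) and its rows already span everything.
-/
open MvPowerSeries Matrix
open scoped Polynomial

instance MvPowerSeries.isLocalHom_constantCoeff {σ R : Type*} [CommRing R] :
    IsLocalHom (constantCoeff : MvPowerSeries σ R →+* R) :=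
  ⟨fun _ h => isUnit_iff_constantCoeff.mpr h⟩

theorem Submodule.eq_top_of_forall_exists_map_eq_single {S T ι : Type*} [CommRing S]
    [CommRing T] [Fintype ι] [DecidableEq ι] (φ : S →+* T) [IsLocalHom φ]
    (N : Submodule S (ι → S)) (hN : ∀ i, ∃ v ∈ N, ∀ j, φ (v j) = (Pi.single i 1 : ι → T) j) :
    N = ⊤ := by
  choose v hvN hv using hN
  let V : Matrix ι ι S := Matrix.of v
  have hVφ : V.map φ = 1 := by
    ext i j
    simp [V, hv, Pi.single_apply, Matrix.one_apply, eq_comm]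
  have hdet : IsUnit V.det := by
    apply isUnit_of_map_unit φ
    rw [RingHom.map_det, RingHom.mapMatrix_apply, hVφ, Matrix.det_one]
    exact isUnit_one
  rw [Submodule.eq_top_iff']
  intro m
  have hm : m = (m ᵥ* V⁻¹) ᵥ* V := by
    rw [Matrix.vecMul_vecMul, Matrix.nonsing_inv_mul V hdet, Matrix.vecMul_one]
  rw [hm, Matrix.vecMul_eq_sum]
  exact Submodule.sum_mem _ fun i _ => N.smul_mem _ (hvN i)

theorem MvPowerSeries.constantCoeff_eulerD {σ R : Type} [CommRing R] (x : σ)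
    (f : MvPowerSeries σ R) : constantCoeff (eulerD x f) = 0 := by
  rw [← coeff_zero_eq_constantCoeff_apply]
  simp [eulerD, coeff_apply]

section ConstantFiber

variable {σ ι R : Type*} (k : Type*) [CommRing k] [CommRing R] [Algebra k R]

def constantFiber (N : Submodule (MvPowerSeries σ R) (ι → MvPowerSeries σ R)) :
    Submodule k (ι → k) where
  carrier := {w | ∃ v ∈ N, ∀ j, constantCoeff (v j) = algebraMap k R (w j)}
  add_mem' := by
    rintro w w' ⟨v, hv, hvw⟩ ⟨v', hv', hvw'⟩
    exact ⟨v + v', N.add_mem hv hv', fun j => by simp [hvw, hvw']⟩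
  zero_mem' := ⟨0, N.zero_mem, fun j => by simp⟩
  smul_mem' := by
    rintro c w ⟨v, hv, hvw⟩
    exact ⟨C (algebraMap k R c) • v, N.smul_mem _ hv, fun j => by simp [hvw]⟩

variable {k} {N : Submodule (MvPowerSeries σ R) (ι → MvPowerSeries σ R)}

theorem mem_constantFiber_of_C_mem {w : ι → k} (h : (fun j => C (algebraMap k R (w j))) ∈ N) :
    w ∈ constantFiber k N :=
  ⟨_, h, fun _ => constantCoeff_C _⟩

theorem mulVec_mem_constantFiber [Fintype ι] (D : MvPowerSeries σ R → MvPowerSeries σ R)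
    (hD : ∀ f, constantCoeff (D f) = 0) (A : Matrix ι ι (MvPowerSeries σ R)) (p : Matrix ι ι k)
    (hA : A.map constantCoeff = p.map (algebraMap k R))
    (hN : ∀ v ∈ N, (fun i => D (v i) + (A *ᵥ v) i) ∈ N) {w : ι → k}
    (hw : w ∈ constantFiber k N) : p *ᵥ w ∈ constantFiber k N := by
  obtain ⟨v, hv, hvw⟩ := hw
  refine ⟨_, hN v hv, fun i => ?_⟩
  have hAij (j : ι) : constantCoeff (A i j) = algebraMap k R (p i j) :=
    congrFun (congrFun hA i) j
  simp [hD, mulVec, dotProduct, hAij, hvw]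

theorem eq_top_of_constantFiber_eq_top [Fintype ι] [DecidableEq ι]
    (h : constantFiber k N = ⊤) : N = ⊤ := by
  refine N.eq_top_of_forall_exists_map_eq_single constantCoeff fun i => ?_
  obtain ⟨v, hv, hvw⟩ : Pi.single i 1 ∈ constantFiber k N := h ▸ Submodule.mem_top
  refine ⟨v, hv, fun j => ?_⟩
  rw [hvw, Pi.apply_single (fun _ => algebraMap k R) (fun _ => map_zero _), map_one]

end ConstantFiber

theorem statement12_general (n r s : ℕ)
    (A : Fin r → Matrix (Fin n) (Fin n)
      (MvPowerSeries (Fin r ⊕ Fin (s + 1)) (Polynomial ℂ)))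
    -- `p_a := A_a|_{Q=t=0}` has entries in `ℂ`
    (p : Fin r → Matrix (Fin n) (Fin n) ℂ)
    (hpdef : ∀ a, m0 (A a) = (p a).map Polynomial.C)
    -- the vectors `P(p₁,…,p_r)e₀` span `ℂ^n`
    (e₀ : Fin n → ℂ)
    (hgen : ∀ W : Submodule ℂ (Fin n → ℂ), e₀ ∈ W →
      (∀ a, ∀ w ∈ W, (p a).mulVec w ∈ W) → W = ⊤)
    -- `N` is a submodule containing `e₀` and stable under `v ↦ ħQ^a∂v/∂Q^a + A_a v`
    (N : Submodule (MvPowerSeries (Fin r ⊕ Fin (s + 1)) (Polynomial ℂ))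
      (Fin n → MvPowerSeries (Fin r ⊕ Fin (s + 1)) (Polynomial ℂ)))
    (he₀N : (fun j => MvPowerSeries.C (σ := Fin r ⊕ Fin (s + 1)) (R := Polynomial ℂ)
      (Polynomial.C (e₀ j))) ∈ N)
    (hstab : ∀ (a : Fin r), ∀ v ∈ N,
      (fun i => MvPowerSeries.C (σ := Fin r ⊕ Fin (s + 1)) (R := Polynomial ℂ) Polynomial.X
          * eulerD (Sum.inl a) (v i) + (A a).mulVec v i) ∈ N) :
    N = ⊤ := by
  have hA (a : Fin r) : (A a).map constantCoeff = (p a).map (algebraMap ℂ ℂ[X]) := by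
    rw [Polynomial.algebraMap_eq]
    exact hpdef a
  have hD (a : Fin r) (f : MvPowerSeries (Fin r ⊕ Fin (s + 1)) ℂ[X]) :
      constantCoeff (C Polynomial.X * eulerD (Sum.inl a) f) = 0 := by
    rw [map_mul, constantCoeff_eulerD, mul_zero]
  exact eq_top_of_constantFiber_eq_top (hgen _ (mem_constantFiber_of_C_mem he₀N) fun a _ =>
    mulVec_mem_constantFiber _ (hD a) (A a) (p a) (hA a) (hstab a))

/-- (generation of an abstract quantum D-module by the unit section:
if the fiber at the origin is generated by `e₀` over `ℂ[p₁,…,p_r]`, then any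
`ℂ[ħ][[Q,t]]`-submodule of `(ℂ[ħ][[Q,t]])^n` containing `e₀` and stable under the
operators `ħQ^a∂/∂Q^a + A_a` is everything).  Here `ℂ[ħ][[Q,t]]` is realized as
`MvPowerSeries (Fin r ⊕ Fin (s+1)) (Polynomial ℂ)`, with `ħ` the polynomial
variable. -/
theorem statement12 (n r s : ℕ) (hn : 1 ≤ n) (hr : 1 ≤ r)
    (A : Fin r → Matrix (Fin n) (Fin n)
      (MvPowerSeries (Fin r ⊕ Fin (s + 1)) (Polynomial ℂ)))
    -- `p_a := A_a|_{Q=t=0}` has entries in `ℂ`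
    (p : Fin r → Matrix (Fin n) (Fin n) ℂ)
    (hpdef : ∀ a, m0 (A a) = (p a).map Polynomial.C)
    -- the vectors `P(p₁,…,p_r)e₀` span `ℂ^n`
    (e₀ : Fin n → ℂ)
    (hgen : ∀ W : Submodule ℂ (Fin n → ℂ), e₀ ∈ W →
      (∀ a, ∀ w ∈ W, (p a).mulVec w ∈ W) → W = ⊤)
    -- `N` is a submodule containing `e₀` and stable under `v ↦ ħQ^a∂v/∂Q^a + A_a v`
    (N : Submodule (MvPowerSeries (Fin r ⊕ Fin (s + 1)) (Polynomial ℂ))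
      (Fin n → MvPowerSeries (Fin r ⊕ Fin (s + 1)) (Polynomial ℂ)))
    (he₀N : (fun j => MvPowerSeries.C (σ := Fin r ⊕ Fin (s + 1)) (R := Polynomial ℂ)
      (Polynomial.C (e₀ j))) ∈ N)
    (hstab : ∀ (a : Fin r), ∀ v ∈ N,
      (fun i => MvPowerSeries.C (σ := Fin r ⊕ Fin (s + 1)) (R := Polynomial ℂ) Polynomial.X
          * eulerD (Sum.inl a) (v i) + (A a).mulVec v i) ∈ N) :
    N = ⊤ :=
  statement12_general n r s A p hpdef e₀ hgen N he₀N hstab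
end
end

section
/- Fix r ≥ 1, s ≥ 0, n = s + 1. Let 𝔸_a(Q,t) (1 ≤ a ≤ r) and Ω_i(Q,t) (0 ≤ i ≤ s) be pairwise commuting n×n matrices with entries in ℂ[[Q^1,…,Q^r,t^0,…,t^s]] satisfying Q^b∂𝔸_a/∂Q^b = Q^a∂𝔸_b/∂Q^a, ∂Ω_i/∂t^j = ∂Ω_j/∂t^i, ∂𝔸_a/∂t^i = Q^a∂Ω_i/∂Q^a, let e_0 ∈ ℂ^n and set p_a := 𝔸_a(0,0). Call a family (t̂^0,…,t̂^s) of elements of ℂ[[Q,t]] with t̂^i|_{Q=t=0} = 0 and with Jacobian matrix (∂t̂^i/∂t^j) invertible over ℂ[[Q,t]] a flat coordinate system for (𝔸, Ω, e_0) if there exists a basis (f_0,…,f_s) of ℂ^n such that Ω_j(Q,t)e_0 = Σ_i (∂t̂^i/∂t^j) f_i for all j and 𝔸_a(Q,t)e_0 = p_ae_0 + Σ_i Q^a(∂t̂^i/∂Q^a) f_i for all a. If (t̂^i) and (t'^i) are two flat coordinate systems for the same data (𝔸, Ω, e_0), then there exists an invertible matrix (b^i_j) ∈ GL_{s+1}(ℂ)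 such that t'^i = Σ_{j=0}^{s} b^i_j t̂^j for all i. -/
noncomputable section

/-- `(t̂^0, …, t̂^s)` is a *flat coordinate system* for the data `(𝔸, Ω, e₀)`:
the `t̂^i` vanish at the origin, their Jacobian `(∂t̂^i/∂t^j)` is invertible over
`ℂ[[Q,t]]`, and there is a basis `(f_0, …, f_s)` of `ℂ^n` with
`Ω_j e₀ = Σ_i (∂t̂^i/∂t^j) f_i` and `𝔸_a e₀ = p_a e₀ + Σ_i Q^a(∂t̂^i/∂Q^a) f_i`,
where `p_a := 𝔸_a(0,0)`. -/
def IsFlatCoordSystem (r s : ℕ)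
    (𝔸 : Fin r → Matrix (Fin (s + 1)) (Fin (s + 1))
      (MvPowerSeries (Fin r ⊕ Fin (s + 1)) ℂ))
    (Ω : Fin (s + 1) → Matrix (Fin (s + 1)) (Fin (s + 1))
      (MvPowerSeries (Fin r ⊕ Fin (s + 1)) ℂ))
    (e₀ : Fin (s + 1) → ℂ)
    (that : Fin (s + 1) → MvPowerSeries (Fin r ⊕ Fin (s + 1)) ℂ) : Prop :=
  (∀ i, MvPowerSeries.constantCoeff (σ := Fin r ⊕ Fin (s + 1)) (R := ℂ) (that i) = 0) ∧
  IsUnit (Matrix.of fun i j => pd (Sum.inr j) (that i)) ∧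
  ∃ f : Fin (s + 1) → Fin (s + 1) → ℂ,
    LinearIndependent ℂ f ∧ Submodule.span ℂ (Set.range f) = ⊤ ∧
    (∀ j, (Ω j).mulVec (fun k => MvPowerSeries.C (σ := Fin r ⊕ Fin (s + 1)) (R := ℂ) (e₀ k))
        = fun k => ∑ i, pd (Sum.inr j) (that i)
            * MvPowerSeries.C (σ := Fin r ⊕ Fin (s + 1)) (R := ℂ) (f i k)) ∧
    (∀ a, (𝔸 a).mulVec (fun k => MvPowerSeries.C (σ := Fin r ⊕ Fin (s + 1)) (R := ℂ) (e₀ k))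
        = fun k => MvPowerSeries.C (σ := Fin r ⊕ Fin (s + 1)) (R := ℂ) ((m0 (𝔸 a)).mulVec e₀ k)
            + ∑ i, eulerD (Sum.inl a) (that i)
                * MvPowerSeries.C (σ := Fin r ⊕ Fin (s + 1)) (R := ℂ) (f i k))

/-!
Both systems express the same vectors `Ω_j e₀` and `𝔸_a e₀ - p_a e₀` in two bases of `ℂⁿ`.
Comparing coordinates through the change-of-basis matrix `b` shows that `t' - b t̂` has all
`∂/∂t^j` and all `Q^a ∂/∂Q^a` equal to zero; since both vanish at the origin, `t' = b t̂`.
-/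

open MvPowerSeries

section Derivations

variable {σ R : Type} [CommRing R]

theorem coeff_pd (x : σ) (f : MvPowerSeries σ R) (e : σ →₀ ℕ) :
    coeff e (pd x f) = ((e x + 1 : ℕ) : R) * coeff (e + Finsupp.single x 1) f := rfl

theorem coeff_eulerD (x : σ) (f : MvPowerSeries σ R) (e : σ →₀ ℕ) :
    coeff e (eulerD x f) = ((e x : ℕ) : R) * coeff e f := rfl

theorem pd_sum_C_mul {ι : Type*} (x : σ) (s : Finset ι) (c : ι → R)
    (f : ι → MvPowerSeries σ R) :
    pd x (∑ i ∈ s, C (c i) * f i) = ∑ i ∈ s, C (c i) * pd x (f i) := by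
  ext e
  simp only [coeff_pd, map_sum, coeff_C_mul, Finset.mul_sum]
  exact Finset.sum_congr rfl fun _ _ => by ring

theorem eulerD_sum_C_mul {ι : Type*} (x : σ) (s : Finset ι) (c : ι → R)
    (f : ι → MvPowerSeries σ R) :
    eulerD x (∑ i ∈ s, C (c i) * f i) = ∑ i ∈ s, C (c i) * eulerD x (f i) := by
  ext e
  simp only [coeff_eulerD, map_sum, coeff_C_mul, Finset.mul_sum]
  exact Finset.sum_congr rfl fun _ _ => by ring

theorem eq_of_eulerD_inl_eq_of_pd_inr_eq [NoZeroDivisors R] [CharZero R] {α β : Type}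
    {u v : MvPowerSeries (α ⊕ β) R} (h0 : constantCoeff u = constantCoeff v)
    (hQ : ∀ a, eulerD (Sum.inl a) u = eulerD (Sum.inl a) v)
    (ht : ∀ j, pd (Sum.inr j) u = pd (Sum.inr j) v) : u = v := by
  ext e
  rcases eq_or_ne e 0 with rfl | he
  · simpa only [coeff_zero_eq_constantCoeff_apply] using h0
  obtain ⟨x, hx⟩ : ∃ x, e x ≠ 0 := by
    by_contra! h
    exact he (Finsupp.ext h)
  cases x with
  | inl a =>
    have h := congrArg (coeff e) (hQ a)
    rw [coeff_eulerD, coeff_eulerD] at h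
    exact mul_left_cancel₀ (Nat.cast_ne_zero.mpr hx) h
  | inr j =>
    have hsplit : e - Finsupp.single (Sum.inr j) 1 + Finsupp.single (Sum.inr j) 1 = e :=
      tsub_add_cancel_of_le (Finsupp.single_le_iff.mpr (Nat.one_le_iff_ne_zero.mpr hx))
    have h := congrArg (coeff (e - Finsupp.single (Sum.inr j) 1)) (ht j)
    rw [coeff_pd, coeff_pd, hsplit] at h
    exact mul_left_cancel₀ (Nat.cast_ne_zero.mpr (Nat.succ_ne_zero _)) h

end Derivations

section ChangeOfBasis

variable {σ K ι κ : Type} [CommRing K] [Fintype ι]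

theorem eq_of_sum_mul_C_eq {f : ι → κ → K} (hf : LinearIndependent K f)
    {g h : ι → MvPowerSeries σ K}
    (H : (fun k => ∑ i, g i * C (f i k)) = fun k => ∑ i, h i * C (f i k)) : g = h := by
  funext i
  ext e
  have hcomb : ∑ i, (coeff e (g i) - coeff e (h i)) • f i = 0 := by
    funext k
    have hk := congrArg (coeff e) (congrFun H k)
    simp only [map_sum, coeff_mul_C] at hk
    simp only [Finset.sum_apply, Pi.smul_apply, smul_eq_mul, Pi.zero_apply, sub_mul,
      Finset.sum_sub_distrib, hk, sub_self]
  exact sub_eq_zero.mp (Fintype.linearIndependent_iff.mp hf _ hcomb i)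

theorem sum_mul_C_eq_sum_toMatrix (B B' : Module.Basis ι K (κ → K))
    (g : ι → MvPowerSeries σ K) (k : κ) :
    ∑ i, g i * C (B i k) = ∑ m, (∑ i, C (B'.toMatrix B m i) * g i) * C (B' m k) := by
  have hB : ∀ i, B i k = ∑ m, B'.toMatrix B m i * B' m k := fun i => by
    conv_lhs => rw [← B'.sum_toMatrix_smul_self B i]
    simp only [Finset.sum_apply, Pi.smul_apply, smul_eq_mul]
  simp only [hB, map_sum, map_mul, Finset.mul_sum, Finset.sum_mul]
  rw [Finset.sum_comm]
  exact Finset.sum_congr rfl fun _ _ => Finset.sum_congr rfl fun _ _ => by ring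

theorem eq_toMatrix_mul_of_sum_mul_C_eq (B B' : Module.Basis ι K (κ → K))
    {g g' : ι → MvPowerSeries σ K}
    (H : (fun k => ∑ i, g i * C (B i k)) = fun k => ∑ i, g' i * C (B' i k)) :
    g' = fun m => ∑ i, C (B'.toMatrix B m i) * g i := by
  refine (eq_of_sum_mul_C_eq B'.linearIndependent ?_).symm
  rw [← H]
  funext k
  exact (sum_mul_C_eq_sum_toMatrix B B' g k).symm

end ChangeOfBasis

theorem statement14_general (r s : ℕ)
    (𝔸 : Fin r → Matrix (Fin (s + 1)) (Fin (s + 1))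
      (MvPowerSeries (Fin r ⊕ Fin (s + 1)) ℂ))
    (Ω : Fin (s + 1) → Matrix (Fin (s + 1)) (Fin (s + 1))
      (MvPowerSeries (Fin r ⊕ Fin (s + 1)) ℂ))
    (e₀ : Fin (s + 1) → ℂ)
    (that that' : Fin (s + 1) → MvPowerSeries (Fin r ⊕ Fin (s + 1)) ℂ)
    (h1 : IsFlatCoordSystem r s 𝔸 Ω e₀ that)
    (h2 : IsFlatCoordSystem r s 𝔸 Ω e₀ that') :
    ∃ b : Matrix (Fin (s + 1)) (Fin (s + 1)) ℂ, IsUnit b ∧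
      ∀ i, that' i = ∑ j, MvPowerSeries.C (σ := Fin r ⊕ Fin (s + 1)) (R := ℂ) (b i j) * that j := by
  obtain ⟨h0, -, f, hli, hsp, hΩ, h𝔸⟩ := h1
  obtain ⟨h0', -, f', hli', hsp', hΩ', h𝔸'⟩ := h2
  obtain ⟨B, rfl⟩ : ∃ B : Module.Basis _ ℂ _, ⇑B = f := ⟨.mk hli hsp.ge, Module.Basis.coe_mk _ _⟩
  obtain ⟨B', rfl⟩ : ∃ B' : Module.Basis _ ℂ _, ⇑B' = f' :=
    ⟨.mk hli' hsp'.ge, Module.Basis.coe_mk _ _⟩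
  have := B'.invertibleToMatrix B
  refine ⟨B'.toMatrix B, isUnit_of_invertible _, fun m => ?_⟩
  apply eq_of_eulerD_inl_eq_of_pd_inr_eq
  · simp only [map_sum, map_mul, h0, h0', mul_zero, Finset.sum_const_zero]
  · intro a
    rw [eulerD_sum_C_mul]
    exact congrFun (eq_toMatrix_mul_of_sum_mul_C_eq B B'
      (funext fun k => add_left_cancel (congrFun ((h𝔸 a).symm.trans (h𝔸' a)) k))) m
  · intro j
    rw [pd_sum_C_mul]
    exact congrFun (eq_toMatrix_mul_of_sum_mul_C_eq B B' ((hΩ j).symm.trans (hΩ' j))) m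

/-- uniqueness of flat coordinates up to a linear transformation
in `GL_{s+1}(ℂ)`: two flat coordinate systems for the same data `(𝔸, Ω, e₀)` differ
by an invertible constant matrix. -/
theorem statement14 (r s : ℕ) (hr : 1 ≤ r)
    (𝔸 : Fin r → Matrix (Fin (s + 1)) (Fin (s + 1))
      (MvPowerSeries (Fin r ⊕ Fin (s + 1)) ℂ))
    (Ω : Fin (s + 1) → Matrix (Fin (s + 1)) (Fin (s + 1))
      (MvPowerSeries (Fin r ⊕ Fin (s + 1)) ℂ))
    -- the connection matrices pairwise commute and are integrable
    (hAA : ∀ a b, 𝔸 a * 𝔸 b = 𝔸 b * 𝔸 a)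
    (hAO : ∀ a i, 𝔸 a * Ω i = Ω i * 𝔸 a)
    (hOO : ∀ i j, Ω i * Ω j = Ω j * Ω i)
    (hiQQ : ∀ a b, meu (Sum.inl b) (𝔸 a) = meu (Sum.inl a) (𝔸 b))
    (hiTT : ∀ i j, mpd (Sum.inr j) (Ω i) = mpd (Sum.inr i) (Ω j))
    (hiQT : ∀ a i, mpd (Sum.inr i) (𝔸 a) = meu (Sum.inl a) (Ω i))
    (e₀ : Fin (s + 1) → ℂ)
    (that that' : Fin (s + 1) → MvPowerSeries (Fin r ⊕ Fin (s + 1)) ℂ)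
    (h1 : IsFlatCoordSystem r s 𝔸 Ω e₀ that)
    (h2 : IsFlatCoordSystem r s 𝔸 Ω e₀ that') :
    ∃ b : Matrix (Fin (s + 1)) (Fin (s + 1)) ℂ, IsUnit b ∧
      ∀ i, that' i = ∑ j, MvPowerSeries.C (σ := Fin r ⊕ Fin (s + 1)) (R := ℂ) (b i j) * that j :=
  statement14_general r s 𝔸 Ω e₀ that that' h1 h2
end
end
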